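/- arXiv:0709.1788 — 5 statements merged into one kernel-verified Lean document; each statement's English description precedes it below -/
import Mathlib

section
/- The maximum modulus M(r) = max_{|z|≤r} |S_q(z)| satisfies the bounds ∏_{j=1}^∞(1+rq^j) - ∏_{j=1}^∞(1-q^j) ≤ M(r) ≤ (∏_{j=0}^∞(1+rq^j))·∑_{k=1}^∞ q^k/(1-q^k) for 0 < q < 1. -/
/-!
On `|z| ≤ r` every factor of `(z;q)_k` has modulus at most `1 + r q^j`, which gives the upper
bound termwise. For the lower bound evaluate at `z = -r`, where all terms are positive: with
`A_N = ∏_{j<N} (1 + r q^{j+1})` and `B_N = ∏_{j<N} (1 - q^{j+1})` one has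
`A_{N+1} - B_{N+1} = A_N - B_N + q^{N+1} (r A_N + B_N)`, and since `B_N ≤ A_N` the increment is
at most `q^{N+1} (1 + r) A_N = q^{N+1} (-r;q)_{N+1}`, which is dominated by the `N`-th term of
`|S_q(-r)|`.
-/

open Finset

noncomputable def qPoch (q x : ℂ) (k : ℕ) : ℂ := ∏ j ∈ Finset.range k, (1 - x * q ^ j)

noncomputable def Sq (q : ℝ) (x : ℂ) : ℂ :=
  -∑' k : ℕ, ((q : ℂ) ^ (k + 1) / (1 - (q : ℂ) ^ (k + 1))) * qPoch q x (k + 1)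

lemma norm_qPoch_le (q x : ℂ) (k : ℕ) :
    ‖qPoch q x k‖ ≤ ∏ j ∈ range k, (1 + ‖x‖ * ‖q‖ ^ j) := by
  rw [qPoch, norm_prod]
  refine prod_le_prod (fun j _ => norm_nonneg _) fun j _ => ?_
  calc ‖1 - x * q ^ j‖ ≤ ‖(1 : ℂ)‖ + ‖x * q ^ j‖ := norm_sub_le _ _
    _ = 1 + ‖x‖ * ‖q‖ ^ j := by rw [norm_one, norm_mul, norm_pow]

lemma qPoch_neg (q x : ℂ) (k : ℕ) : qPoch q (-x) k = ∏ j ∈ range k, (1 + x * q ^ j) := by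
  simp only [qPoch, neg_mul, sub_neg_eq_add]

lemma prod_range_one_add_le_tprod {f : ℕ → ℝ} (hf : ∀ j, 0 ≤ f j)
    (hmul : Multipliable fun j => 1 + f j) (n : ℕ) :
    ∏ j ∈ range n, (1 + f j) ≤ ∏' j, (1 + f j) := by
  refine Monotone.ge_of_tendsto (monotone_nat_of_le_succ fun m => ?_)
    hmul.hasProd.tendsto_prod_nat n
  rw [prod_range_succ]
  exact le_mul_of_one_le_right (prod_nonneg fun j _ => by linarith [hf j]) (by linarith [hf m])

section

variable {q : ℝ}

lemma pow_succ_le_pow_succ_div_one_sub (hq0 : 0 ≤ q) (hq1 : q < 1) (k : ℕ) :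
    q ^ (k + 1) ≤ q ^ (k + 1) / (1 - q ^ (k + 1)) := by
  have hlt : q ^ (k + 1) < 1 := pow_lt_one₀ hq0 hq1 k.succ_ne_zero
  rw [le_div_iff₀ (sub_pos.2 hlt)]
  nlinarith [pow_nonneg hq0 (k + 1)]

lemma summable_pow_succ_div_one_sub (hq0 : 0 ≤ q) (hq1 : q < 1) :
    Summable fun k : ℕ => q ^ (k + 1) / (1 - q ^ (k + 1)) := by
  refine Summable.of_nonneg_of_le (fun k => ?_) (fun k => ?_)
    ((summable_geometric_of_lt_one hq0 hq1).mul_right (q / (1 - q)))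
  · exact (pow_nonneg hq0 _).trans (pow_succ_le_pow_succ_div_one_sub hq0 hq1 k)
  · have hle : q ^ (k + 1) ≤ q := pow_le_of_le_one hq0 hq1.le k.succ_ne_zero
    calc q ^ (k + 1) / (1 - q ^ (k + 1)) ≤ q ^ (k + 1) / (1 - q) := by
          gcongr
      _ = q ^ k * (q / (1 - q)) := by rw [pow_succ]; ring

lemma multipliable_one_add_mul_pow (r : ℝ) (hq0 : 0 ≤ q) (hq1 : q < 1) :
    Multipliable fun j : ℕ => 1 + r * q ^ j :=
  Real.multipliable_one_add_of_summable ((summable_geometric_of_lt_one hq0 hq1).mul_left r)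

lemma multipliable_one_add_mul_pow_succ (r : ℝ) (hq0 : 0 ≤ q) (hq1 : q < 1) :
    Multipliable fun j : ℕ => 1 + r * q ^ (j + 1) := by
  simpa only [pow_succ', mul_assoc] using multipliable_one_add_mul_pow (r * q) hq0 hq1

lemma norm_Sq_le (hq0 : 0 ≤ q) (hq1 : q < 1) {z : ℂ} {r : ℝ} (hz : ‖z‖ ≤ r) :
    ‖Sq q z‖ ≤ (∏' j : ℕ, (1 + r * q ^ j)) * ∑' k : ℕ, q ^ (k + 1) / (1 - q ^ (k + 1)) := by
  have hr : 0 ≤ r := (norm_nonneg z).trans hz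
  rw [Sq, norm_neg]
  refine tsum_of_norm_bounded ((summable_pow_succ_div_one_sub hq0 hq1).hasSum.mul_left _)
    fun k => ?_
  have hcoeff : 0 ≤ q ^ (k + 1) / (1 - q ^ (k + 1)) :=
    (pow_nonneg hq0 _).trans (pow_succ_le_pow_succ_div_one_sub hq0 hq1 k)
  have hpoch : ‖qPoch q z (k + 1)‖ ≤ ∏' j : ℕ, (1 + r * q ^ j) := by
    refine (norm_qPoch_le _ _ _).trans
      ((prod_le_prod (fun j _ => by positivity) fun j _ => ?_).trans
        (prod_range_one_add_le_tprod (fun j => by positivity)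
          (multipliable_one_add_mul_pow r hq0 hq1) (k + 1)))
    rw [Complex.norm_real, Real.norm_of_nonneg hq0]
    gcongr
  rw [norm_mul, ← Complex.ofReal_pow, ← Complex.ofReal_one, ← Complex.ofReal_sub,
    ← Complex.ofReal_div, Complex.norm_real, Real.norm_of_nonneg hcoeff, mul_comm]
  exact mul_le_mul_of_nonneg_right hpoch hcoeff

lemma Sq_neg_ofReal (q r : ℝ) :
    Sq q (-(r : ℂ)) = -(((∑' k : ℕ, q ^ (k + 1) / (1 - q ^ (k + 1)) *
      ∏ j ∈ range (k + 1), (1 + r * q ^ j) : ℝ)) : ℂ) := by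
  rw [Sq, Complex.ofReal_tsum]
  simp only [qPoch_neg]
  push_cast
  rfl

lemma prod_sub_prod_le_sum (hq0 : 0 ≤ q) (hq1 : q ≤ 1) {r : ℝ} (hr : 0 ≤ r) (N : ℕ) :
    ∏ j ∈ range N, (1 + r * q ^ (j + 1)) - ∏ j ∈ range N, (1 - q ^ (j + 1))
      ≤ ∑ k ∈ range N, q ^ (k + 1) * ∏ j ∈ range (k + 1), (1 + r * q ^ j) := by
  induction N with
  | zero => simp
  | succ N ih =>
    set A := ∏ j ∈ range N, (1 + r * q ^ (j + 1))
    set B := ∏ j ∈ range N, (1 - q ^ (j + 1))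
    have hBA : B ≤ A := prod_le_prod (fun j _ => sub_nonneg.2 (pow_le_one₀ hq0 hq1))
      fun j _ => by nlinarith [pow_nonneg hq0 (j + 1)]
    have hP : ∏ j ∈ range (N + 1), (1 + r * q ^ j) = A * (1 + r) := by
      rw [prod_range_succ', pow_zero, mul_one]
    rw [prod_range_succ, prod_range_succ, sum_range_succ, hP]
    nlinarith [mul_le_mul_of_nonneg_left hBA (pow_nonneg hq0 (N + 1))]

lemma tprod_sub_tprod_le_tsum (hq0 : 0 ≤ q) (hq1 : q < 1) {r : ℝ} (hr : 0 ≤ r) :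
    ∏' j : ℕ, (1 + r * q ^ (j + 1)) - ∏' j : ℕ, (1 - q ^ (j + 1))
      ≤ ∑' k : ℕ, q ^ (k + 1) / (1 - q ^ (k + 1)) * ∏ j ∈ range (k + 1), (1 + r * q ^ j) := by
  have hcoeff k : q ^ (k + 1) ≤ q ^ (k + 1) / (1 - q ^ (k + 1)) :=
    pow_succ_le_pow_succ_div_one_sub hq0 hq1 k
  have hcoeff₀ k : 0 ≤ q ^ (k + 1) / (1 - q ^ (k + 1)) := (pow_nonneg hq0 _).trans (hcoeff k)
  have hP k : 0 ≤ ∏ j ∈ range k, (1 + r * q ^ j) := prod_nonneg fun j _ => by positivity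
  have hsum : Summable fun k : ℕ =>
      q ^ (k + 1) / (1 - q ^ (k + 1)) * ∏ j ∈ range (k + 1), (1 + r * q ^ j) :=
    Summable.of_nonneg_of_le (fun k => mul_nonneg (hcoeff₀ k) (hP _))
      (fun k => mul_le_mul_of_nonneg_left
        (prod_range_one_add_le_tprod (fun j => by positivity)
          (multipliable_one_add_mul_pow r hq0 hq1) (k + 1))
        (hcoeff₀ k))
      ((summable_pow_succ_div_one_sub hq0 hq1).mul_right _)
  have hmul₁ := multipliable_one_add_mul_pow_succ r hq0 hq1
  have hmul₂ : Multipliable fun j : ℕ => 1 - q ^ (j + 1) := by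
    simpa only [neg_one_mul, ← sub_eq_add_neg] using multipliable_one_add_mul_pow_succ (-1) hq0 hq1
  refine le_of_tendsto' (hmul₁.hasProd.tendsto_prod_nat.sub hmul₂.hasProd.tendsto_prod_nat)
    fun N => (prod_sub_prod_le_sum hq0 hq1.le hr N).trans ?_
  refine (sum_le_sum fun k _ => mul_le_mul_of_nonneg_right (hcoeff k) (hP _)).trans ?_
  exact hsum.sum_le_tsum _ fun k _ => mul_nonneg (hcoeff₀ k) (hP _)

end

theorem qlog_maximum_modulus_bounds (q r : ℝ) (hq0 : 0 < q) (hq1 : q < 1) (hr : 0 ≤ r) :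
    (∏' j : ℕ, (1 + r * q ^ (j + 1))) - (∏' j : ℕ, (1 - q ^ (j + 1)))
      ≤ sSup ((fun z => ‖Sq q z‖) '' Metric.closedBall (0 : ℂ) r) ∧
    sSup ((fun z => ‖Sq q z‖) '' Metric.closedBall (0 : ℂ) r)
      ≤ (∏' j : ℕ, (1 + r * q ^ j)) * ∑' k : ℕ, q ^ (k + 1) / (1 - q ^ (k + 1)) := by
  have hbound : ∀ z ∈ Metric.closedBall (0 : ℂ) r,
      ‖Sq q z‖ ≤ (∏' j : ℕ, (1 + r * q ^ j)) * ∑' k : ℕ, q ^ (k + 1) / (1 - q ^ (k + 1)) :=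
    fun z hz => norm_Sq_le hq0.le hq1 (by simpa using hz)
  have hneg : -(r : ℂ) ∈ Metric.closedBall (0 : ℂ) r := by simp [abs_of_nonneg hr]
  refine ⟨?_, csSup_le ⟨_, 0, Metric.mem_closedBall_self hr, rfl⟩
    (Set.forall_mem_image.2 hbound)⟩
  calc (∏' j : ℕ, (1 + r * q ^ (j + 1))) - (∏' j : ℕ, (1 - q ^ (j + 1)))
      ≤ ∑' k : ℕ, q ^ (k + 1) / (1 - q ^ (k + 1)) * ∏ j ∈ range (k + 1), (1 + r * q ^ j) :=
        tprod_sub_tprod_le_tsum hq0.le hq1 hr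
    _ ≤ ‖Sq q (-(r : ℂ))‖ := by
        rw [Sq_neg_ofReal, norm_neg, Complex.norm_real]
        exact le_abs_self _
    _ ≤ sSup ((fun z => ‖Sq q z‖) '' Metric.closedBall (0 : ℂ) r) :=
        le_csSup ⟨_, Set.forall_mem_image.2 hbound⟩ (Set.mem_image_of_mem _ hneg)
end

section
/- The q-logarithm S_q has the Taylor expansion S_q(x) = -∑_{k=1}^∞ (q^k/(1-q^k))·(1 + q^{k(k-1)/2}·(-x)^k/(q;q)_k), valid for all x ∈ ℂ, where 0 < q < 1. -/
open Finset Filter Topology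

section Algebra

variable (q : ℂ)

lemma qPoch_succ (x : ℂ) (n : ℕ) : qPoch q x (n + 1) = (1 - x) * qPoch q (q * x) n := by
  simp only [qPoch, prod_range_succ', pow_zero, mul_one, pow_succ]
  rw [mul_comm]
  congr 1
  exact prod_congr rfl fun j _ => by ring

lemma qPoch_self_succ (n : ℕ) : qPoch q q (n + 1) = qPoch q q n * (1 - q ^ (n + 1)) := by
  rw [qPoch, prod_range_succ, pow_succ']
  rfl

variable {q} in
lemma qPoch_self_ne_zero (hq : ∀ n, q ^ (n + 1) ≠ 1) (n : ℕ) : qPoch q q n ≠ 0 :=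
  prod_ne_zero_iff.mpr fun j _ => by
    rw [← pow_succ']
    exact sub_ne_zero.mpr (hq j).symm

/-- `(q^(m-n+1); q)_n`; the truncated subtraction `m - i` makes it vanish for `n > m`,
as the Gaussian binomial coefficient should. -/
noncomputable def qDescFactorial (m n : ℕ) : ℂ := ∏ i ∈ range n, (1 - q ^ (m - i))

lemma qDescFactorial_succ_succ (m n : ℕ) :
    qDescFactorial q (m + 1) (n + 1) = (1 - q ^ (m + 1)) * qDescFactorial q m n := by
  simp only [qDescFactorial, prod_range_succ', Nat.add_sub_add_right, Nat.sub_zero]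
  ring

lemma qDescFactorial_succ (m n : ℕ) :
    qDescFactorial q m (n + 1) = qDescFactorial q m n * (1 - q ^ (m - n)) :=
  prod_range_succ _ _

lemma qDescFactorial_eq_zero_of_lt {m n : ℕ} (h : m < n) : qDescFactorial q m n = 0 :=
  prod_eq_zero (mem_range.mpr h) (by simp)

noncomputable def qBinom (m n : ℕ) : ℂ := qDescFactorial q m n / qPoch q q n

@[simp]
lemma qBinom_zero_right (m : ℕ) : qBinom q m 0 = 1 := by
  simp [qBinom, qDescFactorial, qPoch]

lemma qBinom_eq_zero_of_lt {m n : ℕ} (h : m < n) : qBinom q m n = 0 := by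
  rw [qBinom, qDescFactorial_eq_zero_of_lt q h, zero_div]

noncomputable def lambertCoeff (k : ℕ) : ℂ := q ^ k / (1 - q ^ k)

/-- The `n`-th term of Euler's series `(x; q)_∞ = ∑ q^(n(n-1)/2) (-x)^n / (q; q)_n`. -/
noncomputable def eulerTerm (x : ℂ) (n : ℕ) : ℂ := q ^ n.choose 2 * (-x) ^ n / qPoch q q n

lemma eulerTerm_succ (x : ℂ) (n : ℕ) :
    eulerTerm q x (n + 1) = eulerTerm q x n * (q ^ n * (-x) / (1 - q ^ (n + 1))) := by
  rw [eulerTerm, eulerTerm, qPoch_self_succ, div_mul_div_comm, Nat.choose_succ_succ',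
    Nat.choose_one_right]
  ring

variable {q} (hq : ∀ n, q ^ (n + 1) ≠ 1)
include hq

lemma qBinom_succ_succ (m n : ℕ) :
    qBinom q (m + 1) (n + 1) = qBinom q m n + q ^ (n + 1) * qBinom q m (n + 1) := by
  have h₀ := qPoch_self_ne_zero hq n
  have h₁ := sub_ne_zero.mpr (hq n).symm
  simp only [qBinom, qDescFactorial_succ_succ, qDescFactorial_succ, qPoch_self_succ]
  rcases le_or_gt n m with hnm | hmn
  · have hpow : q ^ (n + 1) * q ^ (m - n) = q ^ (m + 1) := by
      rw [← pow_add]; congr 1; omega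
    field_simp
    linear_combination qDescFactorial q m n * hpow
  · simp [qDescFactorial_eq_zero_of_lt q hmn]

lemma lambertCoeff_mul_qBinom_succ (m n : ℕ) :
    lambertCoeff q (m + 1) * qBinom q (m + 1) (n + 1) =
      lambertCoeff q (n + 1) * (qBinom q (m + 1) (n + 1) - qBinom q m (n + 1)) := by
  have h₀ := qPoch_self_ne_zero hq n
  have hn := sub_ne_zero.mpr (hq n).symm
  have hm := sub_ne_zero.mpr (hq m).symm
  simp only [lambertCoeff, qBinom, qDescFactorial_succ_succ, qDescFactorial_succ, qPoch_self_succ]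
  rcases le_or_gt n m with hnm | hmn
  · have hpow : q ^ (n + 1) * q ^ (m - n) = q ^ (m + 1) := by
      rw [← pow_add]; congr 1; omega
    field_simp
    linear_combination (-qDescFactorial q m n) * hpow
  · simp [qDescFactorial_eq_zero_of_lt q hmn]

theorem qPoch_eq_sum_qBinom (x : ℂ) (m : ℕ) :
    qPoch q x m = ∑ n ∈ range (m + 1), qBinom q m n * q ^ n.choose 2 * (-x) ^ n := by
  induction m generalizing x with
  | zero => simp [qPoch]
  | succ m ih =>
    have hshift : ∑ n ∈ range (m + 1), q ^ (n + 1) * qBinom q m (n + 1) *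
          q ^ (n + 1).choose 2 * (-x) ^ (n + 1) + 1 =
        ∑ n ∈ range (m + 1), q ^ n * qBinom q m n * q ^ n.choose 2 * (-x) ^ n := by
      rw [sum_range_succ _ m, qBinom_eq_zero_of_lt q (Nat.lt_succ_self m), sum_range_succ' _ m]
      simp
    rw [qPoch_succ, ih, sum_range_succ' _ (m + 1), qBinom_zero_right]
    simp only [qBinom_succ_succ hq, add_mul, sum_add_distrib, Nat.choose_zero_succ, pow_zero,
      mul_one]
    rw [add_assoc, hshift, mul_sum, ← sum_add_distrib]
    refine sum_congr rfl fun n _ => ?_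
    rw [Nat.choose_succ_succ', Nat.choose_one_right]
    ring

lemma sum_lambertCoeff_mul_qBinom (M n : ℕ) :
    ∑ k ∈ range (M + 1), lambertCoeff q k * qBinom q k (n + 1) =
      lambertCoeff q (n + 1) * qBinom q M (n + 1) := by
  induction M with
  | zero => simp [qBinom_eq_zero_of_lt q (Nat.succ_pos n)]
  | succ M ih =>
    rw [sum_range_succ, ih, lambertCoeff_mul_qBinom_succ hq]
    ring

theorem sum_lambertCoeff_mul_qPoch (x : ℂ) (M : ℕ) :
    ∑ k ∈ range M, lambertCoeff q (k + 1) * qPoch q x (k + 1) =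
      ∑ k ∈ range M, lambertCoeff q (k + 1) +
        ∑ n ∈ range M, lambertCoeff q (n + 1) *
          (qBinom q M (n + 1) * q ^ (n + 1).choose 2 * (-x) ^ (n + 1)) := by
  have hexpand : ∀ k ∈ range M, qPoch q x (k + 1) =
      ∑ n ∈ range (M + 1), qBinom q (k + 1) n * q ^ n.choose 2 * (-x) ^ n := by
    intro k hk
    rw [qPoch_eq_sum_qBinom hq]
    refine sum_subset (range_subset_range.mpr (by simp at hk; omega)) fun n _ hn => ?_
    rw [qBinom_eq_zero_of_lt q (by simpa using hn), zero_mul, zero_mul]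
  rw [sum_congr rfl fun k hk => by rw [hexpand k hk]]
  simp_rw [mul_sum]
  rw [sum_comm, sum_range_succ', add_comm]
  congr 1
  · simp
  · refine sum_congr rfl fun n _ => ?_
    have hsum := sum_lambertCoeff_mul_qBinom hq M n
    rw [sum_range_succ', qBinom_eq_zero_of_lt q (Nat.succ_pos n), mul_zero, add_zero] at hsum
    simp only [← mul_assoc, ← sum_mul, hsum]

end Algebra

section Analysis

variable {q : ℂ} (hq : ‖q‖ < 1)
include hq

lemma pow_succ_ne_one_of_norm_lt_one (n : ℕ) : q ^ (n + 1) ≠ 1 := fun h => by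
  have := congrArg norm h
  rw [norm_pow, norm_one] at this
  exact (pow_lt_one₀ (norm_nonneg q) hq n.succ_ne_zero).ne this

lemma one_sub_norm_le_norm_one_sub_pow (n : ℕ) : 1 - ‖q‖ ≤ ‖1 - q ^ (n + 1)‖ := by
  have hpow : ‖q‖ ^ (n + 1) ≤ ‖q‖ := pow_le_of_le_one (norm_nonneg q) hq.le n.succ_ne_zero
  have := norm_sub_norm_le (1 : ℂ) (q ^ (n + 1))
  rw [norm_one, norm_pow] at this
  linarith

lemma summable_norm_lambertCoeff : Summable fun k => ‖lambertCoeff q (k + 1)‖ := by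
  have hq' : 0 < 1 - ‖q‖ := sub_pos.mpr hq
  refine .of_nonneg_of_le (fun _ => norm_nonneg _) (fun k => ?_)
    ((summable_geometric_of_lt_one (norm_nonneg q) hq).mul_left (‖q‖ / (1 - ‖q‖)))
  rw [lambertCoeff, norm_div, norm_pow, pow_succ']
  calc ‖q‖ * ‖q‖ ^ k / ‖1 - q ^ (k + 1)‖ ≤ ‖q‖ * ‖q‖ ^ k / (1 - ‖q‖) :=
        div_le_div_of_nonneg_left (by positivity) hq' (one_sub_norm_le_norm_one_sub_pow hq k)
    _ = ‖q‖ / (1 - ‖q‖) * ‖q‖ ^ k := by ring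

lemma summable_norm_eulerTerm (x : ℂ) : Summable fun n => ‖eulerTerm q x n‖ := by
  have hq' : 0 < 1 - ‖q‖ := sub_pos.mpr hq
  have hsmall : ∀ᶠ n in atTop, ‖q‖ ^ n * ‖x‖ / (1 - ‖q‖) ≤ 1 / 2 := by
    have hlim : Tendsto (fun n => ‖q‖ ^ n * ‖x‖ / (1 - ‖q‖)) atTop (𝓝 0) := by
      simpa using
        ((tendsto_pow_atTop_nhds_zero_of_lt_one (norm_nonneg q) hq).mul_const ‖x‖).div_const _
    exact hlim.eventually (ge_mem_nhds (by norm_num))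
  refine summable_of_ratio_norm_eventually_le (r := 1 / 2) (by norm_num) ?_
  filter_upwards [hsmall] with n hn
  rw [norm_norm, norm_norm, eulerTerm_succ, norm_mul, mul_comm]
  gcongr
  calc ‖q ^ n * (-x) / (1 - q ^ (n + 1))‖ ≤ ‖q‖ ^ n * ‖x‖ / (1 - ‖q‖) := by
        rw [norm_div, norm_mul, norm_pow, norm_neg]
        exact div_le_div_of_nonneg_left (by positivity) hq' (one_sub_norm_le_norm_one_sub_pow hq n)
    _ ≤ 1 / 2 := hn

lemma summable_lambertCoeff_mul_eulerTerm (x : ℂ) :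
    Summable fun k => lambertCoeff q (k + 1) * eulerTerm q x (k + 1) :=
  .of_norm_bounded ((summable_norm_lambertCoeff hq).mul_right (∑' n, ‖eulerTerm q x n‖)) fun k => by
    rw [norm_mul]
    gcongr
    exact (summable_norm_eulerTerm hq x).le_tsum _ fun _ _ => norm_nonneg _

lemma tendsto_qBinom (n : ℕ) : Tendsto (fun M => qBinom q M n) atTop (𝓝 (qPoch q q n)⁻¹) := by
  have hnum : Tendsto (fun M => qDescFactorial q M n) atTop (𝓝 1) := by
    rw [← prod_const_one (s := range n)]
    refine tendsto_finsetProd _ fun i _ => ?_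
    simpa using tendsto_const_nhds.sub
      ((tendsto_pow_atTop_nhds_zero_of_norm_lt_one hq).comp (tendsto_sub_atTop_nat i))
  simpa [qBinom] using hnum.div_const (qPoch q q n)

end Analysis

section RealParameter

variable {q : ℝ}

lemma norm_qBinom_mul_le (hq0 : 0 ≤ q) (hq1 : q ≤ 1) (x : ℂ) (M n : ℕ) :
    ‖qBinom (q : ℂ) M n * (q : ℂ) ^ n.choose 2 * (-x) ^ n‖ ≤ ‖eulerTerm (q : ℂ) x n‖ := by
  have hfactor (k : ℕ) : ‖1 - (q : ℂ) ^ k‖ ≤ 1 := by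
    rw [← Complex.ofReal_pow, ← Complex.ofReal_one, ← Complex.ofReal_sub, Complex.norm_real,
      Real.norm_of_nonneg (sub_nonneg.mpr (pow_le_one₀ hq0 hq1))]
    linarith [pow_nonneg hq0 k]
  have hnum : ‖qDescFactorial (q : ℂ) M n‖ ≤ 1 := by
    rw [qDescFactorial, norm_prod]
    exact prod_le_one (fun _ _ => norm_nonneg _) fun i _ => hfactor (M - i)
  rw [eulerTerm, qBinom, norm_mul, norm_mul, norm_div, norm_div, norm_mul]
  calc _ = ‖qDescFactorial (q : ℂ) M n‖ *
        (‖(q : ℂ) ^ n.choose 2‖ * ‖(-x) ^ n‖ / ‖qPoch (q : ℂ) q n‖) := by ring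
    _ ≤ _ := mul_le_of_le_one_left (by positivity) hnum

variable (hq0 : 0 ≤ q) (hq1 : q < 1)
include hq0 hq1

lemma norm_ofReal_lt_one : ‖(q : ℂ)‖ < 1 := by
  rwa [Complex.norm_real, Real.norm_of_nonneg hq0]

lemma norm_qPoch_le_s3 (x : ℂ) (m : ℕ) : ‖qPoch (q : ℂ) x m‖ ≤ ∑' n, ‖eulerTerm (q : ℂ) x n‖ := by
  rw [qPoch_eq_sum_qBinom (pow_succ_ne_one_of_norm_lt_one (norm_ofReal_lt_one hq0 hq1))]
  calc _ ≤ ∑ n ∈ range (m + 1), ‖eulerTerm (q : ℂ) x n‖ :=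
        (norm_sum_le _ _).trans (sum_le_sum fun n _ => norm_qBinom_mul_le hq0 hq1.le x m n)
    _ ≤ _ := (summable_norm_eulerTerm (norm_ofReal_lt_one hq0 hq1) x).sum_le_tsum _
        fun _ _ => norm_nonneg _

lemma summable_lambertCoeff_mul_qPoch (x : ℂ) :
    Summable fun k => lambertCoeff (q : ℂ) (k + 1) * qPoch (q : ℂ) x (k + 1) :=
  .of_norm_bounded ((summable_norm_lambertCoeff (norm_ofReal_lt_one hq0 hq1)).mul_right _)
    fun k => by
      rw [norm_mul]
      gcongr
      exact norm_qPoch_le_s3 hq0 hq1 x (k + 1)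

lemma tendsto_sum_lambertCoeff_mul_qBinom (x : ℂ) :
    Tendsto (fun M => ∑ n ∈ range M, lambertCoeff (q : ℂ) (n + 1) *
        (qBinom (q : ℂ) M (n + 1) * (q : ℂ) ^ (n + 1).choose 2 * (-x) ^ (n + 1)))
      atTop (𝓝 (∑' n, lambertCoeff (q : ℂ) (n + 1) * eulerTerm (q : ℂ) x (n + 1))) := by
  have hq := norm_ofReal_lt_one hq0 hq1
  refine .congr (fun M => tsum_eq_sum (s := range M) fun n hn => ?_)
    (tendsto_tsum_of_dominated_convergence
      ((summable_norm_lambertCoeff hq).mul_right (∑' n, ‖eulerTerm (q : ℂ) x n‖)) (fun n => ?_)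
      (.of_forall fun M n => ?_))
  · rw [qBinom_eq_zero_of_lt _ (by simpa using hn), zero_mul, zero_mul, mul_zero]
  · have hlim := ((tendsto_qBinom hq (n + 1)).mul_const ((q : ℂ) ^ (n + 1).choose 2 *
      (-x) ^ (n + 1))).const_mul (lambertCoeff (q : ℂ) (n + 1))
    convert hlim using 2 with M
    · ring
    · rw [eulerTerm]; ring
  · rw [norm_mul]
    gcongr
    exact (norm_qBinom_mul_le hq0 hq1.le x M (n + 1)).trans
      ((summable_norm_eulerTerm hq x).le_tsum _ fun _ _ => norm_nonneg _)

theorem hasSum_lambertCoeff_mul_qPoch (x : ℂ) :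
    HasSum (fun k => lambertCoeff (q : ℂ) (k + 1) * qPoch (q : ℂ) x (k + 1))
      (∑' k, lambertCoeff (q : ℂ) (k + 1) +
        ∑' k, lambertCoeff (q : ℂ) (k + 1) * eulerTerm (q : ℂ) x (k + 1)) := by
  have hq := norm_ofReal_lt_one hq0 hq1
  rw [(summable_lambertCoeff_mul_qPoch hq0 hq1 x).hasSum_iff_tendsto_nat]
  simp_rw [sum_lambertCoeff_mul_qPoch (pow_succ_ne_one_of_norm_lt_one hq)]
  exact ((summable_norm_lambertCoeff hq).of_norm.hasSum.tendsto_sum_nat).add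
    (tendsto_sum_lambertCoeff_mul_qBinom hq0 hq1 x)

end RealParameter

theorem qlog_taylor_expansion (q : ℝ) (hq0 : 0 < q) (hq1 : q < 1) (x : ℂ) :
    Sq q x = -∑' k : ℕ, ((q : ℂ) ^ (k + 1) / (1 - (q : ℂ) ^ (k + 1))) *
      (1 + (q : ℂ) ^ ((k + 1) * k / 2) * (-x) ^ (k + 1) / qPoch q (q : ℂ) (k + 1)) := by
  have hq := norm_ofReal_lt_one hq0.le hq1
  change -∑' k, lambertCoeff (q : ℂ) (k + 1) * qPoch q x (k + 1) = _
  rw [(hasSum_lambertCoeff_mul_qPoch hq0.le hq1 x).tsum_eq,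
    ← (summable_norm_lambertCoeff hq).of_norm.tsum_add (summable_lambertCoeff_mul_eulerTerm hq x)]
  congr 1
  refine tsum_congr fun k => ?_
  rw [eulerTerm, lambertCoeff, Nat.choose_two_right, Nat.add_sub_cancel]
  ring
end

section
/- For all x ≠ 0 with 0 < q < 1: ∑_{k=0}^∞ q^k (x;q)_k = (1 - (x;q)_∞)/x, where (x;q)_∞ = ∏_{j=0}^∞ (1 - x q^j). -/
/-!
Since `x q^k (x;q)_k = (x;q)_k - (x;q)_{k+1}`, the partial sums telescope:
`x ∑_{k<n} q^k (x;q)_k = 1 - (x;q)_n`. For `|q| < 1` the infinite product converges, so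
`(x;q)_n` is bounded, the series converges absolutely, and letting `n → ∞` gives the identity.
-/

open Filter Topology Finset

theorem mul_sum_pow_mul_qPoch (q x : ℂ) (n : ℕ) :
    x * ∑ k ∈ range n, q ^ k * qPoch q x k = 1 - qPoch q x n := by
  induction n with
  | zero => simp [qPoch]
  | succ n ih =>
    rw [sum_range_succ, mul_add, ih, qPoch, qPoch, prod_range_succ]
    ring

section

variable {q : ℂ} (x : ℂ)

theorem multipliable_one_sub_mul_pow (hq : ‖q‖ < 1) : Multipliable fun j : ℕ ↦ 1 - x * q ^ j := by
  simpa [sub_eq_add_neg] using multipliable_one_add_of_summable (f := fun j : ℕ ↦ -(x * q ^ j))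
    (by simpa using (summable_geometric_of_lt_one (norm_nonneg q) hq).mul_left ‖x‖)

theorem tendsto_qPoch (hq : ‖q‖ < 1) :
    Tendsto (qPoch q x) atTop (𝓝 (∏' j : ℕ, (1 - x * q ^ j))) :=
  (multipliable_one_sub_mul_pow x hq).hasProd.tendsto_prod_nat

theorem summable_pow_mul_qPoch (hq : ‖q‖ < 1) : Summable fun k : ℕ ↦ q ^ k * qPoch q x k := by
  have hO : (fun k : ℕ ↦ q ^ k * qPoch q x k) =O[atTop] fun k ↦ q ^ k * 1 :=
    (Asymptotics.isBigO_refl _ _).mul ((tendsto_qPoch x hq).isBigO_one ℂ)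
  simp only [mul_one] at hO
  exact summable_of_isBigO_nat (summable_geometric_of_norm_lt_one hq).norm hO.norm_right

theorem mul_tsum_pow_mul_qPoch (hq : ‖q‖ < 1) :
    x * ∑' k : ℕ, q ^ k * qPoch q x k = 1 - ∏' j : ℕ, (1 - x * q ^ j) := by
  refine tendsto_nhds_unique ((summable_pow_mul_qPoch x hq).hasSum.tendsto_sum_nat.const_mul x) ?_
  simpa only [mul_sum_pow_mul_qPoch] using tendsto_const_nhds.sub (tendsto_qPoch x hq)

end

theorem qPoch_geometric_sum (q : ℝ) (hq0 : 0 < q) (hq1 : q < 1) (x : ℂ) (hx : x ≠ 0) :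
    ∑' k : ℕ, (q : ℂ) ^ k * qPoch q x k = (1 - ∏' j : ℕ, (1 - x * (q : ℂ) ^ j)) / x := by
  have hq : ‖(q : ℂ)‖ < 1 := by
    rwa [Complex.norm_real, Real.norm_of_nonneg hq0.le]
  rw [eq_div_iff hx, mul_comm, mul_tsum_pow_mul_qPoch x hq]
end

section
/- For every positive integer n: ∑_{k=1}^n ((q^{-n};q)_k/(1-q^k))·q^k = -n, where 0 < q < 1. -/
/-!
Write `(a;q)_k` for the q-Pochhammer symbol and `L(a, n) = ∑_{k=1}^n (a;q)_k q^k / (1 - q^k)`.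
The identity `(a;q)_{k+1} = (1 - a) (aq;q)_k` gives, term by term,
`(a;q)_{k+1} q^{k+1}/(1 - q^{k+1}) = (aq;q)_{k+1} q^{k+1}/(1 - q^{k+1}) - a q^{k+1} (aq;q)_k`,
and the last terms telescope, so `L(a, n) = L(aq, n) - 1 + (aq;q)_n`.
If `a q^n = 1` then `(aq;q)_n = 0` and the `n`-th term of `L(aq, n)` vanishes, so
`L(a, n) = L(aq, n - 1) - 1`, and induction on `n` gives `L(a, n) = -n`.
-/

open Finset

section QPochhammer

variable {K : Type*}

def qPochhammer [CommRing K] (a q : K) (k : ℕ) : K :=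
  ∏ j ∈ range k, (1 - a * q ^ j)

section CommRing

variable [CommRing K] (a q : K)

theorem qPochhammer_zero : qPochhammer a q 0 = 1 := prod_range_zero _

theorem qPochhammer_succ (k : ℕ) :
    qPochhammer a q (k + 1) = qPochhammer a q k * (1 - a * q ^ k) :=
  prod_range_succ _ _

theorem qPochhammer_succ' (k : ℕ) :
    qPochhammer a q (k + 1) = qPochhammer (a * q) q k * (1 - a) := by
  simp only [qPochhammer, prod_range_succ', pow_succ', pow_zero, mul_one, mul_assoc]

theorem qPochhammer_eq_zero_of_mul_pow_eq_one {n : ℕ} (h : a * q ^ n = 1) :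
    qPochhammer a q (n + 1) = 0 := by
  rw [qPochhammer_succ, h, sub_self, mul_zero]

theorem sum_mul_pow_mul_qPochhammer (m : ℕ) :
    ∑ k ∈ range m, a * q ^ k * qPochhammer a q k = 1 - qPochhammer a q m := by
  induction m with
  | zero => simp [qPochhammer_zero]
  | succ m ih => rw [sum_range_succ, ih, qPochhammer_succ]; ring

end CommRing

section Field

variable [Field K]

def qLogSum (a q : K) (n : ℕ) : K :=
  ∑ k ∈ range n, qPochhammer a q (k + 1) / (1 - q ^ (k + 1)) * q ^ (k + 1)

variable {q : K}

theorem qPochhammer_div_mul_pow_eq_sub (hq : ∀ k : ℕ, q ^ (k + 1) ≠ 1) (a : K) (k : ℕ) :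
    qPochhammer a q (k + 1) / (1 - q ^ (k + 1)) * q ^ (k + 1) =
      qPochhammer (a * q) q (k + 1) / (1 - q ^ (k + 1)) * q ^ (k + 1)
        - a * q * q ^ k * qPochhammer (a * q) q k := by
  have hk : 1 - q ^ (k + 1) ≠ 0 := sub_ne_zero.mpr (hq k).symm
  rw [qPochhammer_succ', qPochhammer_succ]
  field_simp
  ring

theorem qLogSum_eq_qLogSum_mul (hq : ∀ k : ℕ, q ^ (k + 1) ≠ 1) (a : K) (n : ℕ) :
    qLogSum a q n = qLogSum (a * q) q n - 1 + qPochhammer (a * q) q n := by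
  rw [qLogSum, sum_congr rfl fun k _ => qPochhammer_div_mul_pow_eq_sub hq a k, sum_sub_distrib,
    sum_mul_pow_mul_qPochhammer, ← qLogSum]
  ring

theorem qLogSum_of_mul_pow_eq_one (hq : ∀ k : ℕ, q ^ (k + 1) ≠ 1) {a : K} {n : ℕ}
    (ha : a * q ^ n = 1) : qLogSum a q n = -n := by
  induction n generalizing a with
  | zero => simp [qLogSum]
  | succ n ih =>
    have haq : a * q * q ^ n = 1 := by rw [mul_assoc, ← pow_succ']; exact ha
    have hvanish := qPochhammer_eq_zero_of_mul_pow_eq_one (a * q) q haq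
    rw [qLogSum_eq_qLogSum_mul hq, hvanish, qLogSum, sum_range_succ, hvanish, ← qLogSum,
      ih haq]
    push_cast
    ring

end Field

end QPochhammer

theorem qlog_finite_sum_identity_general (q : ℝ) (hq0 : 0 < q) (hq1 : q < 1)
    (n : ℕ) :
    ∑ k ∈ Finset.Icc 1 n,
      (∏ j ∈ Finset.range k, (1 - q ^ (-(n : ℤ)) * q ^ j)) / (1 - q ^ k) * q ^ k
      = -(n : ℝ) := by
  have hq : ∀ k : ℕ, q ^ (k + 1) ≠ 1 := fun k =>
    (pow_lt_one₀ hq0.le hq1 k.succ_ne_zero).ne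
  have ha : q ^ (-(n : ℤ)) * q ^ n = 1 := by
    rw [zpow_neg, zpow_natCast, inv_mul_cancel₀ (pow_ne_zero n hq0.ne')]
  rw [← qLogSum_of_mul_pow_eq_one hq ha, qLogSum, range_eq_Ico,
    sum_Ico_add' (fun k => qPochhammer _ q k / (1 - q ^ k) * q ^ k)]
  rfl

theorem qlog_finite_sum_identity (q : ℝ) (hq0 : 0 < q) (hq1 : q < 1)
    (n : ℕ) (hn : 1 ≤ n) :
    ∑ k ∈ Finset.Icc 1 n,
      (∏ j ∈ Finset.range k, (1 - q ^ (-(n : ℤ)) * q ^ j)) / (1 - q ^ k) * q ^ k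
      = -(n : ℝ) :=
  qlog_finite_sum_identity_general q hq0 hq1 n
end

section
/- For 0 < q < 1, |t| < 1, and all x ∈ ℂ, the Lambert-type series F_q(x,t) = -∑_{k=1}^∞ (x;q)_k·t^k/(1-t^k) has the expansion F_q(x,t) = -∑_{k=1}^∞ t^k/(1-t^k) - ∑_{ℓ=1}^∞ x^ℓ (-1)^ℓ q^{ℓ(ℓ-1)/2}·(∑_{n=1}^∞ t^{nℓ}·(t^n q^{ℓ+1};q)_∞/(t^n;q)_∞). -/
open Finset Filter Topology

noncomputable def Fq (q : ℝ) (x t : ℂ) : ℂ :=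
  -∑' k : ℕ, qPoch q x (k + 1) * t ^ (k + 1) / (1 - t ^ (k + 1))

/-!
Expanding `(x;q)_k = ∑_l (-x)^l q^(l choose 2) [k choose l]_q` and
`t^k / (1 - t^k) = ∑_{n ≥ 1} t^(nk)` turns `F_q(x,t)` into a triple series over `(k, l, n)`.
It converges absolutely, because `q^(l choose 2) [k choose l]_q ≤ q^(l choose 2) / (1 - q)^l`
and `|t|^(nk) ≤ |t|^(n+k-1)`, so it may be summed over `k` first. The generating function
`∑_k [k choose l]_q u^k = u^l / (u;q)_{l+1}` at `u = t^n`, together with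
`(u;q)_∞ = (u;q)_{l+1} (u q^(l+1);q)_∞`, gives the inner series of the statement.
-/

lemma one_sub_ne_zero_of_norm_lt_one {R : Type*} [NormedRing R] [NormOneClass R] {u : R}
    (hu : ‖u‖ < 1) : 1 - u ≠ 0 := by
  rw [sub_ne_zero]; rintro rfl; simp at hu

lemma norm_mul_pow_lt_one {u r : ℂ} (hu : ‖u‖ < 1) (hr : ‖r‖ ≤ 1) (j : ℕ) : ‖u * r ^ j‖ < 1 := by
  rw [norm_mul, norm_pow]
  exact mul_lt_one_of_nonneg_of_lt_one_left (norm_nonneg u) hu (pow_le_one₀ (norm_nonneg r) hr)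

lemma norm_pow_succ_lt_one {t : ℂ} (ht : ‖t‖ < 1) (n : ℕ) : ‖t ^ (n + 1)‖ < 1 := by
  rw [norm_pow]; exact pow_lt_one₀ (norm_nonneg t) ht n.succ_ne_zero

lemma tsum_pow_succ_mul_succ {t : ℂ} (ht : ‖t‖ < 1) (m : ℕ) :
    ∑' n : ℕ, t ^ ((n + 1) * (m + 1)) = t ^ (m + 1) / (1 - t ^ (m + 1)) := by
  calc ∑' n : ℕ, t ^ ((n + 1) * (m + 1)) = ∑' n : ℕ, t ^ (m + 1) * (t ^ (m + 1)) ^ n :=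
        tsum_congr fun n => by rw [mul_comm, pow_mul, pow_succ']
    _ = t ^ (m + 1) / (1 - t ^ (m + 1)) := by
        rw [tsum_mul_left, tsum_geometric_of_norm_lt_one (norm_pow_succ_lt_one ht m),
          div_eq_mul_inv]

lemma summable_pow_mul_pow_choose_two (c : ℝ) {q : ℝ} (hq0 : 0 ≤ q) (hq1 : q < 1) :
    Summable fun l : ℕ => c ^ l * q ^ l.choose 2 := by
  refine summable_of_ratio_norm_eventually_le (r := 1 / 2) (by norm_num) ?_
  have hlim : Tendsto (fun l : ℕ => |c| * q ^ l) atTop (𝓝 0) := by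
    simpa using (tendsto_pow_atTop_nhds_zero_of_lt_one hq0 hq1).const_mul |c|
  filter_upwards [hlim.eventually (ge_mem_nhds (by norm_num : (0 : ℝ) < 1 / 2))] with l hl
  simp only [Nat.choose_succ_succ', Nat.choose_one_right, norm_mul, norm_pow, Real.norm_eq_abs,
    abs_of_nonneg hq0]
  calc |c| ^ (l + 1) * q ^ (l + l.choose 2) = (|c| * q ^ l) * (|c| ^ l * q ^ l.choose 2) := by
        ring
    _ ≤ 1 / 2 * (|c| ^ l * q ^ l.choose 2) := by gcongr

section InfiniteProduct

variable {r : ℂ}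

lemma summable_norm_mul_pow (c : ℂ) (hr : ‖r‖ < 1) : Summable fun j : ℕ => ‖c * r ^ j‖ := by
  simpa [norm_mul, norm_pow] using (summable_geometric_of_lt_one (norm_nonneg r) hr).mul_left ‖c‖

lemma multipliable_one_sub_mul_pow_s17 (c : ℂ) (hr : ‖r‖ < 1) :
    Multipliable fun j : ℕ => 1 - c * r ^ j := by
  simpa [sub_eq_add_neg] using
    multipliable_one_add_of_summable (f := fun j => -(c * r ^ j))
      (by simpa using summable_norm_mul_pow c hr)

lemma tprod_one_sub_mul_pow_ne_zero {c : ℂ} (hc : ‖c‖ < 1) (hr : ‖r‖ < 1) :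
    ∏' j : ℕ, (1 - c * r ^ j) ≠ 0 := by
  simpa [sub_eq_add_neg] using tprod_one_add_ne_zero_of_summable
    (fun j => by simpa [sub_eq_add_neg] using
      one_sub_ne_zero_of_norm_lt_one (norm_mul_pow_lt_one hc hr.le j))
    (f := fun j => -(c * r ^ j)) (by simpa using summable_norm_mul_pow c hr)

lemma prod_range_mul_tprod_one_sub_mul_pow (c : ℂ) (hr : ‖r‖ < 1) (L : ℕ) :
    (∏ j ∈ range L, (1 - c * r ^ j)) * ∏' j : ℕ, (1 - c * r ^ L * r ^ j)
      = ∏' j : ℕ, (1 - c * r ^ j) := by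
  have hshift : ∀ j, 1 - c * r ^ L * r ^ j = 1 - c * r ^ (j + L) := fun j => by ring
  rw [tprod_congr hshift]
  exact Multipliable.prod_mul_tprod_nat_mul'
    ((multipliable_one_sub_mul_pow_s17 (c * r ^ L) hr).congr hshift)

lemma tprod_one_sub_mul_pow_div_tprod {c : ℂ} (hc : ‖c‖ < 1) (hr : ‖r‖ < 1) (L : ℕ) :
    (∏' j : ℕ, (1 - c * r ^ L * r ^ j)) / ∏' j : ℕ, (1 - c * r ^ j)
      = (∏ j ∈ range L, (1 - c * r ^ j))⁻¹ := by
  rw [← prod_range_mul_tprod_one_sub_mul_pow c hr L, div_mul_cancel_right₀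
    (tprod_one_sub_mul_pow_ne_zero (norm_mul_pow_lt_one hc hr.le L) hr)]

end InfiniteProduct

/-- The coefficient of `(-x)^l` in `(x;q)_k`, that is `q^(l choose 2)` times the Gaussian binomial
`[k choose l]_q`; the recursion comes from `(x;q)_{k+1} = (x;q)_k (1 - x q^k)`. -/
noncomputable def qPochCoeff (q : ℝ) : ℕ → ℕ → ℝ
  | 0, _ => 1
  | _ + 1, 0 => 0
  | l + 1, k + 1 => qPochCoeff q (l + 1) k + q ^ k * qPochCoeff q l k

section qPochCoeff

variable {q : ℝ}

@[simp]
lemma qPochCoeff_zero_left (k : ℕ) : qPochCoeff q 0 k = 1 := by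
  cases k <;> rfl

@[simp]
lemma qPochCoeff_succ_zero (l : ℕ) : qPochCoeff q (l + 1) 0 = 0 := rfl

lemma qPochCoeff_succ_succ (l k : ℕ) :
    qPochCoeff q (l + 1) (k + 1) = qPochCoeff q (l + 1) k + q ^ k * qPochCoeff q l k := rfl

lemma qPochCoeff_nonneg (hq : 0 ≤ q) : ∀ l k, 0 ≤ qPochCoeff q l k
  | 0, k => by simp
  | l + 1, 0 => le_rfl
  | l + 1, k + 1 => by
    rw [qPochCoeff_succ_succ]
    have := qPochCoeff_nonneg hq (l + 1) k
    have := qPochCoeff_nonneg hq l k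
    positivity

lemma qPochCoeff_eq_zero_of_lt : ∀ {l k : ℕ}, k < l → qPochCoeff q l k = 0
  | l + 1, 0, _ => rfl
  | l + 1, k + 1, h => by
    rw [qPochCoeff_succ_succ, qPochCoeff_eq_zero_of_lt (by omega),
      qPochCoeff_eq_zero_of_lt (by omega), mul_zero, add_zero]

lemma qPochCoeff_succ_eq_sum (l : ℕ) :
    ∀ k, qPochCoeff q (l + 1) k = ∑ i ∈ range k, q ^ i * qPochCoeff q l i
  | 0 => rfl
  | k + 1 => by rw [qPochCoeff_succ_succ, qPochCoeff_succ_eq_sum l k, sum_range_succ]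

lemma qPochCoeff_le (hq0 : 0 ≤ q) (hq1 : q < 1) :
    ∀ l k, qPochCoeff q l k ≤ q ^ l.choose 2 / (1 - q) ^ l
  | 0, k => by simp
  | l + 1, k => by
    set B := q ^ l.choose 2 / (1 - q) ^ l
    have hB : 0 ≤ B := div_nonneg (pow_nonneg hq0 _) (pow_nonneg (by linarith) _)
    -- the terms with `i < l` vanish, and the remaining ones form a geometric tail
    have hIco : ∑ i ∈ range k, q ^ i * qPochCoeff q l i = ∑ i ∈ Ico l k, q ^ i * qPochCoeff q l i :=
      (sum_subset (fun i hi => mem_range.2 (mem_Ico.1 hi).2) fun i hi hi' => by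
        rw [qPochCoeff_eq_zero_of_lt (by simp_all), mul_zero]).symm
    calc qPochCoeff q (l + 1) k = ∑ i ∈ Ico l k, q ^ i * qPochCoeff q l i := by
          rw [qPochCoeff_succ_eq_sum, hIco]
      _ ≤ ∑ i ∈ Ico l k, q ^ i * B :=
          sum_le_sum fun i _ =>
            mul_le_mul_of_nonneg_left (qPochCoeff_le hq0 hq1 l i) (pow_nonneg hq0 _)
      _ = B * ∑ i ∈ Ico l k, q ^ i := by rw [mul_sum]; simp_rw [mul_comm]
      _ ≤ B * (q ^ l / (1 - q)) := mul_le_mul_of_nonneg_left (geom_sum_Ico_le_of_lt_one hq0 hq1) hB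
      _ = q ^ (l + 1).choose 2 / (1 - q) ^ (l + 1) := by
          rw [Nat.choose_succ_succ', Nat.choose_one_right, pow_add, pow_succ]
          simp only [B]
          field_simp

lemma qPoch_eq_sum_qPochCoeff (x : ℂ) :
    ∀ k, qPoch q x k = ∑ l ∈ range (k + 1), (-x) ^ l * qPochCoeff q l k
  | 0 => by simp [qPoch]
  | k + 1 => by
    set a : ℕ → ℂ := fun l => (-x) ^ l * qPochCoeff q l k
    have hstep : ∀ l, (-x) ^ (l + 1) * (qPochCoeff q (l + 1) (k + 1) : ℂ)
        = a (l + 1) + (-x) * q ^ k * a l := by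
      intro l
      simp only [a, qPochCoeff_succ_succ]
      push_cast
      ring
    have htop : a (k + 1) = 0 := by
      simp [a, qPochCoeff_eq_zero_of_lt k.lt_succ_self]
    calc qPoch q x (k + 1) = (∑ l ∈ range (k + 1), a l) * (1 - x * q ^ k) := by
          rw [qPoch, prod_range_succ, ← qPoch, qPoch_eq_sum_qPochCoeff x k]
      _ = (∑ l ∈ range (k + 1), a (l + 1)) + a 0 + (-x) * q ^ k * ∑ l ∈ range (k + 1), a l := by
          rw [← sum_range_succ' a (k + 1), sum_range_succ a (k + 1), htop]
          ring
      _ = ∑ l ∈ range (k + 1 + 1), (-x) ^ l * qPochCoeff q l (k + 1) := by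
          rw [sum_range_succ' _ (k + 1), sum_congr rfl fun l _ => hstep l, sum_add_distrib,
            ← mul_sum]
          simp only [a, qPochCoeff_zero_left]
          ring

lemma summable_qPochCoeff_mul_pow (hq0 : 0 ≤ q) (hq1 : q < 1) (l : ℕ) {u : ℂ} (hu : ‖u‖ < 1) :
    Summable fun k => (qPochCoeff q l k : ℂ) * u ^ k := by
  refine .of_norm_bounded ((summable_geometric_of_lt_one (norm_nonneg u) hu).mul_left
    (q ^ l.choose 2 / (1 - q) ^ l)) fun k => ?_
  rw [norm_mul, norm_pow, Complex.norm_real, Real.norm_of_nonneg (qPochCoeff_nonneg hq0 l k)]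
  exact mul_le_mul_of_nonneg_right (qPochCoeff_le hq0 hq1 l k) (by positivity)

lemma hasSum_qPochCoeff_mul_pow (hq0 : 0 ≤ q) (hq1 : q < 1) (l : ℕ) {u : ℂ} (hu : ‖u‖ < 1) :
    HasSum (fun k => (qPochCoeff q l k : ℂ) * u ^ k)
      ((q : ℂ) ^ l.choose 2 * u ^ l / ∏ j ∈ range (l + 1), (1 - u * q ^ j)) := by
  induction l generalizing u with
  | zero => simpa [div_eq_mul_inv] using hasSum_geometric_of_norm_lt_one hu
  | succ l ih =>
    have hq : ‖(q : ℂ)‖ ≤ 1 := by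
      rw [Complex.norm_real, Real.norm_of_nonneg hq0]; exact hq1.le
    have hqu : ‖(q : ℂ) * u‖ < 1 := by simpa [mul_comm] using norm_mul_pow_lt_one hu hq 1
    set V := (q : ℂ) ^ l.choose 2 * ((q : ℂ) * u) ^ l / ∏ j ∈ range (l + 1), (1 - q * u * q ^ j)
    obtain ⟨S, hS⟩ := summable_qPochCoeff_mul_pow hq0 hq1 (l + 1) hu
    have hshift : HasSum (fun k => (qPochCoeff q (l + 1) (k + 1) : ℂ) * u ^ (k + 1)) S := by
      simpa using (hasSum_nat_add_iff' 1).mpr hS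
    have hrec : HasSum (fun k => (qPochCoeff q (l + 1) (k + 1) : ℂ) * u ^ (k + 1))
        (u * S + u * V) := by
      refine ((hS.mul_left u).add ((ih hqu).mul_left u)).congr_fun fun k => ?_
      rw [qPochCoeff_succ_succ]
      push_cast
      ring
    have hprod : ∏ j ∈ range (l + 1 + 1), (1 - u * q ^ j)
        = (∏ j ∈ range (l + 1), (1 - q * u * q ^ j)) * (1 - u) := by
      rw [prod_range_succ']
      simp only [pow_succ, pow_zero, mul_one]
      congr 1
      exact prod_congr rfl fun j _ => by ring
    have h1u := one_sub_ne_zero_of_norm_lt_one hu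
    have hP : ∏ j ∈ range (l + 1), (1 - q * u * q ^ j) ≠ 0 :=
      prod_ne_zero_iff.2 fun j _ => one_sub_ne_zero_of_norm_lt_one (norm_mul_pow_lt_one hqu hq j)
    convert hS using 1
    have hSV : S * (1 - u) = u * V := by linear_combination hshift.unique hrec
    rw [hprod, Nat.choose_succ_succ', Nat.choose_one_right, div_eq_iff (mul_ne_zero hP h1u)]
    have hVP : V * ∏ j ∈ range (l + 1), (1 - q * u * q ^ j) = q ^ l.choose 2 * (q * u) ^ l :=
      div_mul_cancel₀ _ hP
    linear_combination (-∏ j ∈ range (l + 1), (1 - q * u * q ^ j)) * hSV - u * hVP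

end qPochCoeff

/-- The term of index `(k, (l, n))` of the triple series obtained from `Fq q x t` by expanding
`(x;q)_{k+1}` in powers of `x` and `t^(k+1) / (1 - t^(k+1))` as `∑_n t^((n+1)(k+1))`. -/
noncomputable def fqTerm (q : ℝ) (x t : ℂ) (k : ℕ) (p : ℕ × ℕ) : ℂ :=
  (-x) ^ p.1 * qPochCoeff q p.1 (k + 1) * t ^ ((p.2 + 1) * (k + 1))

section fqTerm

variable {q : ℝ} (x : ℂ) {t : ℂ}

lemma norm_fqTerm_le (hq0 : 0 ≤ q) (hq1 : q < 1) (ht : ‖t‖ < 1) (k l n : ℕ) :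
    ‖fqTerm q x t k (l, n)‖ ≤ ‖t‖ ^ k * ((‖x‖ / (1 - q)) ^ l * q ^ l.choose 2 * ‖t‖ ^ n) := by
  have hexp : ‖t‖ ^ ((n + 1) * (k + 1)) ≤ ‖t‖ ^ (k + n) :=
    pow_le_pow_of_le_one (norm_nonneg t) ht.le (by nlinarith)
  have hc := qPochCoeff_le hq0 hq1 l (k + 1)
  have hc0 := qPochCoeff_nonneg hq0 l (k + 1)
  calc ‖fqTerm q x t k (l, n)‖
      = ‖x‖ ^ l * qPochCoeff q l (k + 1) * ‖t‖ ^ ((n + 1) * (k + 1)) := by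
        simp [fqTerm, norm_pow, Real.norm_of_nonneg hc0]
    _ ≤ ‖x‖ ^ l * (q ^ l.choose 2 / (1 - q) ^ l) * ‖t‖ ^ (k + n) := by gcongr
    _ = ‖t‖ ^ k * ((‖x‖ / (1 - q)) ^ l * q ^ l.choose 2 * ‖t‖ ^ n) := by
        rw [div_pow, pow_add]; ring

lemma summable_fqTerm (hq0 : 0 ≤ q) (hq1 : q < 1) (ht : ‖t‖ < 1) :
    Summable (Function.uncurry (fqTerm q x t)) := by
  have hgeo := summable_geometric_of_lt_one (norm_nonneg t) ht
  have hc : 0 ≤ ‖x‖ / (1 - q) := div_nonneg (norm_nonneg x) (sub_nonneg.2 hq1.le)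
  refine .of_norm_bounded (hgeo.mul_of_nonneg
    ((summable_pow_mul_pow_choose_two _ hq0 hq1).mul_of_nonneg hgeo
      (fun l => by positivity) fun n => by positivity) (fun k => by positivity)
    fun p => by positivity) fun ⟨k, l, n⟩ => norm_fqTerm_le x hq0 hq1 ht k l n

lemma tsum_fqTerm_eq_qPoch (hq0 : 0 ≤ q) (hq1 : q < 1) (ht : ‖t‖ < 1) (k : ℕ) :
    ∑' p, fqTerm q x t k p = qPoch q x (k + 1) * t ^ (k + 1) / (1 - t ^ (k + 1)) := by
  have hn : ∀ l, ∑' n, fqTerm q x t k (l, n)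
      = (-x) ^ l * qPochCoeff q l (k + 1) * (t ^ (k + 1) / (1 - t ^ (k + 1))) := fun l => by
    simp only [fqTerm]
    rw [tsum_mul_left, tsum_pow_succ_mul_succ ht]
  have hfin : ∀ l ∉ range (k + 1 + 1),
      (-x) ^ l * qPochCoeff q l (k + 1) * (t ^ (k + 1) / (1 - t ^ (k + 1))) = 0 := fun l hl => by
    rw [qPochCoeff_eq_zero_of_lt (by simpa using hl)]; simp
  have hk : Summable (fqTerm q x t k) := (summable_fqTerm x hq0 hq1 ht).prod_factor k
  rw [hk.tsum_prod, tsum_congr hn, tsum_eq_sum hfin,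
    ← sum_mul, ← qPoch_eq_sum_qPochCoeff, mul_div_assoc]

lemma tsum_fqTerm_zero (ht : ‖t‖ < 1) (n : ℕ) :
    ∑' k, fqTerm q x t k (0, n) = t ^ (n + 1) / (1 - t ^ (n + 1)) := by
  simp only [fqTerm, pow_zero, qPochCoeff_zero_left, Complex.ofReal_one, one_mul]
  simp_rw [mul_comm (n + 1)]
  exact tsum_pow_succ_mul_succ ht n

lemma tsum_fqTerm_succ (hq0 : 0 ≤ q) (hq1 : q < 1) (ht : ‖t‖ < 1) (l n : ℕ) :
    ∑' k, fqTerm q x t k (l + 1, n) = (-x) ^ (l + 1) * (q ^ (l + 1).choose 2 *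
      ((t ^ (n + 1)) ^ (l + 1) / ∏ j ∈ range (l + 2), (1 - t ^ (n + 1) * q ^ j))) := by
  have h := (hasSum_nat_add_iff' 1).2
    (hasSum_qPochCoeff_mul_pow hq0 hq1 (l + 1) (norm_pow_succ_lt_one ht n))
  simp only [range_one, sum_singleton, qPochCoeff_succ_zero, Complex.ofReal_zero, zero_mul,
    sub_zero] at h
  simp only [fqTerm]
  rw [← mul_div_assoc, h.tsum_eq.symm, ← tsum_mul_left]
  exact tsum_congr fun k => by rw [pow_mul]; ring

end fqTerm

theorem Fq_expansion_in_powers_of_x (q : ℝ) (hq0 : 0 < q) (hq1 : q < 1)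
    (x t : ℂ) (ht : ‖t‖ < 1) :
    Fq q x t = -(∑' k : ℕ, t ^ (k + 1) / (1 - t ^ (k + 1)))
      - ∑' l : ℕ, x ^ (l + 1) * (-1 : ℂ) ^ (l + 1) * (q : ℂ) ^ ((l + 1) * l / 2) *
        ∑' n : ℕ, t ^ ((n + 1) * (l + 1)) *
          (∏' j : ℕ, (1 - t ^ (n + 1) * (q : ℂ) ^ (l + 2) * (q : ℂ) ^ j)) /
          (∏' j : ℕ, (1 - t ^ (n + 1) * (q : ℂ) ^ j)) := by
  have hq : ‖(q : ℂ)‖ < 1 := by rwa [Complex.norm_real, Real.norm_of_nonneg hq0.le]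
  have hT := summable_fqTerm x hq0.le hq1 ht
  have hK : Summable fun p : ℕ × ℕ => ∑' k, fqTerm q x t k p := hT.prod_symm.prod
  have hprod : ∀ l n : ℕ, t ^ ((n + 1) * (l + 1)) *
      (∏' j : ℕ, (1 - t ^ (n + 1) * (q : ℂ) ^ (l + 2) * (q : ℂ) ^ j)) /
      (∏' j : ℕ, (1 - t ^ (n + 1) * (q : ℂ) ^ j))
        = (t ^ (n + 1)) ^ (l + 1) / ∏ j ∈ range (l + 2), (1 - t ^ (n + 1) * q ^ j) := fun l n => by
    rw [mul_div_assoc, tprod_one_sub_mul_pow_div_tprod (norm_pow_succ_lt_one ht n) hq, pow_mul,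
      div_eq_mul_inv]
  calc Fq q x t = -∑' k, ∑' p, fqTerm q x t k p := by
        simp only [Fq, tsum_fqTerm_eq_qPoch x hq0.le hq1 ht]
    _ = -∑' l, ∑' n, ∑' k, fqTerm q x t k (l, n) := by rw [← hT.tsum_comm, hK.tsum_prod]
    _ = _ := by
      rw [hK.prod.tsum_eq_zero_add]
      simp only [tsum_fqTerm_zero x ht, tsum_fqTerm_succ x hq0.le hq1 ht, hprod, tsum_mul_left,
        neg_pow x, Nat.choose_two_right, Nat.add_sub_cancel]
      ring_nf
end
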